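/- arXiv:2006.14056 — 2 statements merged into one kernel-verified Lean document; each statement's English description precedes it below -/
import Mathlib

section
/- The smooth projection function satisfies the monotonicity property: if ‖φ‖ ≤ c, then (φ̂ − φ)ᵀ P_c^ε(φ̂, μ) ≤ (φ̂ − φ)ᵀ μ for all φ̂, μ ∈ ℝ³. -/
/-!
Outside the branch where it is the identity, `proj` subtracts a nonnegative multiple of `φ̂`
from `μ`, and `⟪φ̂ - φ, φ̂⟫ ≥ 0` by Cauchy–Schwarz since `‖φ‖ ≤ c ≤ ‖φ̂‖`.
-/

open scoped RealInnerProductSpace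

/-- The smooth projection function `P_c^ε(φ̂, μ)`. -/
noncomputable def proj (c ε : ℝ) (φh μ : EuclideanSpace ℝ (Fin 3)) :
    EuclideanSpace ℝ (Fin 3) :=
  if ‖φh‖ < c ∨ (⟪φh, μ⟫ : ℝ) ≤ 0 then μ
  else μ - (min 1 ((‖φh‖ - c) / ε) * (⟪φh, μ⟫ : ℝ) / ‖φh‖ ^ 2) • φh

section InnerProductSpace

variable {E : Type*} [NormedAddCommGroup E] [InnerProductSpace ℝ E]

theorem real_inner_sub_left_self_nonneg_of_norm_le {x y : E} (h : ‖x‖ ≤ ‖y‖) :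
    0 ≤ ⟪y - x, y⟫ := by
  have hxy : ⟪x, y⟫ ≤ ⟪y, y⟫ :=
    calc ⟪x, y⟫ ≤ ‖x‖ * ‖y‖ := real_inner_le_norm x y
      _ ≤ ‖y‖ * ‖y‖ := by gcongr
      _ = ⟪y, y⟫ := (real_inner_self_eq_norm_mul_norm y).symm
  rw [inner_sub_left]
  linarith

theorem real_inner_sub_smul_le {x y z : E} {t : ℝ} (ht : 0 ≤ t) (hxy : 0 ≤ ⟪x, y⟫) :
    ⟪x, z - t • y⟫ ≤ ⟪x, z⟫ := by
  rw [inner_sub_right, real_inner_smul_right]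
  linarith [mul_nonneg ht hxy]

end InnerProductSpace

theorem proj_monotone_general (c ε : ℝ) (hε : 0 < ε)
    (φ : EuclideanSpace ℝ (Fin 3)) (hφ : ‖φ‖ ≤ c)
    (φh μ : EuclideanSpace ℝ (Fin 3)) :
    (⟪φh - φ, proj c ε φh μ⟫ : ℝ) ≤ (⟪φh - φ, μ⟫ : ℝ) := by
  unfold proj
  split_ifs with h
  · exact le_rfl
  obtain ⟨hcφh, hpos⟩ := not_or.mp h
  have hθ : 0 ≤ min 1 ((‖φh‖ - c) / ε) :=
    le_min zero_le_one (div_nonneg (by linarith) hε.le)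
  have hcoeff : 0 ≤ min 1 ((‖φh‖ - c) / ε) * ⟪φh, μ⟫ / ‖φh‖ ^ 2 :=
    div_nonneg (mul_nonneg hθ (le_of_not_ge hpos)) (sq_nonneg _)
  exact real_inner_sub_smul_le hcoeff
    (real_inner_sub_left_self_nonneg_of_norm_le (by linarith))

theorem proj_monotone (c ε : ℝ) (hc : 0 < c) (hε : 0 < ε)
    (φ : EuclideanSpace ℝ (Fin 3)) (hφ : ‖φ‖ ≤ c)
    (φh μ : EuclideanSpace ℝ (Fin 3)) :
    (⟪φh - φ, proj c ε φh μ⟫ : ℝ) ≤ (⟪φh - φ, μ⟫ : ℝ) :=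
  proj_monotone_general c ε hε φ hφ φh μ
end

section
/- Let p₁, p₂, p₃, p₄ ∈ ℝ³ be four non-coplanar constant anchors (i.e., p₂ − p₁, p₃ − p₁, p₄ − p₁ are linearly independent), and let αᵢ be weights with Σαᵢ = 1. Then the matrix Σⱼ₌₁⁴ p̄ⱼ p̄ⱼᵀ, with p̄ⱼ := Σᵢ αᵢ(pᵢ − pⱼ), is positive definite. -/
/-!
Because `∑ αᵢ = 1`, the differences `p̄ⱼ − p̄ₖ = pₖ − pⱼ` do not depend on `α`, so the `p̄ⱼ`
span everything the edge vectors `pₖ − p₀` span, which is all of `ℝ³`. The matrix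
`∑ⱼ p̄ⱼ p̄ⱼᵀ` is `AᵀA` for the matrix `A` with rows `p̄ⱼ`, and `A` is injective because a vector
orthogonal to a spanning family vanishes.
-/

/-- The differenced anchor vectors `p̄ⱼ := ∑ᵢ αᵢ (pᵢ − pⱼ)`. -/
noncomputable def pbar (anchors : Fin 4 → EuclideanSpace ℝ (Fin 3))
    (α : Fin 4 → ℝ) (j : Fin 4) : EuclideanSpace ℝ (Fin 3) :=
  ∑ i, α i • (anchors i - anchors j)

open Submodule Set Matrix

theorem eq_zero_of_forall_inner_eq_zero_of_span_eq_top {𝕜 E ι : Type*} [RCLike 𝕜]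
    [NormedAddCommGroup E] [InnerProductSpace 𝕜 E] {v : ι → E}
    (hv : span 𝕜 (range v) = ⊤) {x : E} (hx : ∀ j, inner 𝕜 x (v j) = 0) : x = 0 := by
  have : innerₛₗ 𝕜 x = 0 := LinearMap.ext_on_range hv hx
  exact inner_self_eq_zero.mp (LinearMap.congr_fun this x)

theorem posDef_sum_vecMulVec_of_span_eq_top {ι n : Type*} [Fintype ι] [Fintype n]
    {v : ι → EuclideanSpace ℝ n} (hv : span ℝ (range v) = ⊤) :
    (∑ j, vecMulVec (v j).ofLp (v j).ofLp).PosDef := by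
  set A : Matrix ι n ℝ := Matrix.of fun j a => v j a
  have hA : ∑ j, vecMulVec (v j).ofLp (v j).ofLp = Aᴴ * A := by
    ext a b
    simp [A, Matrix.mul_apply, Matrix.sum_apply, vecMulVec_apply]
  rw [hA]
  refine .conjTranspose_mul_self A fun x y hxy => ?_
  have hinner : ∀ j, inner ℝ (WithLp.toLp 2 (x - y)) (v j) = 0 := fun j => by
    simpa [A, mulVec, EuclideanSpace.inner_eq_star_dotProduct, sub_eq_zero, dotProduct_comm]
      using congr_fun hxy j
  simpa [sub_eq_zero] using eq_zero_of_forall_inner_eq_zero_of_span_eq_top hv hinner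

theorem pbar_sub_pbar (anchors : Fin 4 → EuclideanSpace ℝ (Fin 3))
    {α : Fin 4 → ℝ} (hα : ∑ i, α i = 1) (j k : Fin 4) :
    pbar anchors α j - pbar anchors α k = anchors k - anchors j := by
  simp only [pbar, ← Finset.sum_sub_distrib, ← smul_sub, sub_sub_sub_cancel_left,
    ← Finset.sum_smul, hα, one_smul]

theorem span_range_pbar_eq_top {anchors : Fin 4 → EuclideanSpace ℝ (Fin 3)}
    (hnc : LinearIndependent ℝ
      ![anchors 1 - anchors 0, anchors 2 - anchors 0, anchors 3 - anchors 0])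
    {α : Fin 4 → ℝ} (hα : ∑ i, α i = 1) :
    span ℝ (range (pbar anchors α)) = ⊤ := by
  rw [eq_top_iff, ← hnc.span_eq_top_of_card_eq_finrank (by simp), span_le]
  have hdiff : ∀ k, anchors k - anchors 0 ∈ span ℝ (range (pbar anchors α)) := fun k => by
    rw [← pbar_sub_pbar anchors hα]
    exact sub_mem (subset_span (mem_range_self 0)) (subset_span (mem_range_self k))
  rintro _ ⟨i, rfl⟩
  fin_cases i <;> exact hdiff _

theorem four_noncoplanar_anchors_posdef
    (anchors : Fin 4 → EuclideanSpace ℝ (Fin 3))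
    (hnc : LinearIndependent ℝ
      ![anchors 1 - anchors 0, anchors 2 - anchors 0, anchors 3 - anchors 0])
    (α : Fin 4 → ℝ) (hα : ∑ i, α i = 1) :
    (∑ j : Fin 4,
      Matrix.of (fun a b : Fin 3 => pbar anchors α j a * pbar anchors α j b)).PosDef :=
  posDef_sum_vecMulVec_of_span_eq_top (span_range_pbar_eq_top hnc hα)
end
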